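/- Let d ≥ 7 be an integer and T ∈ ℝ. The function u_T^*(t,x) = −a_d/(b_d(T−t)² + |x|²) is smooth on (ℝ × ℝ^d) ∖ {(T,0)} and solves the Yang-Mills wave equation: for every (t,x) ∈ ℝ × ℝ^d with (t,x) ≠ (T,0), one has −∂_t² u_T^*(t,x) + Δ_x u_T^*(t,x) = (d−4)(|x|² u_T^*(t,x)³ + 3 u_T^*(t,x)²). -/

import Mathlib

open Real

noncomputable def ad (d : ℕ) : ℝ :=
  2 * (1 + Real.sqrt (((d : ℝ) - 6) / (3 * ((d : ℝ) - 4))))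

noncomputable def bd (d : ℕ) : ℝ :=
  (1 / 3) * (2 * ((d : ℝ) - 6) + Real.sqrt (3 * ((d : ℝ) - 4) * ((d : ℝ) - 6)))

/-- The self-similar blowup profile `u_T^*`. -/
noncomputable def uStar (d : ℕ) (T : ℝ) (t : ℝ) (x : EuclideanSpace ℝ (Fin d)) : ℝ :=
  -(ad d) / (bd d * (T - t) ^ 2 + ‖x‖ ^ 2)

/-- The Euclidean Laplacian of a scalar function, as a sum of second directional
derivatives in the coordinate directions. -/
noncomputable def lap (d : ℕ) (f : EuclideanSpace ℝ (Fin d) → ℝ)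
    (x : EuclideanSpace ℝ (Fin d)) : ℝ :=
  ∑ i : Fin d,
    iteratedFDeriv ℝ 2 f x ![EuclideanSpace.single i 1, EuclideanSpace.single i 1]

/-! The profile is `u = -a / q` with `q(t, x) = b (T - t)² + ‖x‖²`, and `q > 0` off `(T, 0)`
because `b > 0`. Restricted to a line, in time or along a coordinate direction in space, `u` is
`-a` divided by a quadratic polynomial, whose second derivative is explicit; this gives
`-∂ₜ²u = 2ab (4b (T - t)² - q) / q³` and `Δu = 2a (d q - 4‖x‖²) / q³`. After clearing `q³` and
substituting `b² (T - t)² = b (q - ‖x‖²)`, the equation reduces to the two identities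
`6b + 2d = 3(d - 4) a` and `8(b + 1) = (d - 4) a²`, which is what determines `a_d` and `b_d`. -/

open Filter Topology
open scoped RealInnerProductSpace

lemma mul_sqrt_div_eq_sqrt_mul {r : ℝ} (hr : 0 ≤ r) (y : ℝ) : r * √(y / r) = √(r * y) := by
  rw [Real.sqrt_div' _ hr, Real.sqrt_mul hr, ← mul_div_assoc, mul_div_right_comm, div_sqrt]

section InverseQuadratic

variable (a α β γ : ℝ)

lemma hasDerivAt_quadratic (t : ℝ) :
    HasDerivAt (fun s => α * s ^ 2 + β * s + γ) (2 * α * t + β) t := by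
  have := (((hasDerivAt_pow 2 t).const_mul α).add ((hasDerivAt_id t).const_mul β)).add_const γ
  exact this.congr_deriv (by simp only [Nat.cast_ofNat, Nat.add_one_sub_one, pow_one]; ring)

variable {t : ℝ}

lemma hasDerivAt_div_quadratic (h : α * t ^ 2 + β * t + γ ≠ 0) :
    HasDerivAt (fun s => a / (α * s ^ 2 + β * s + γ))
      (-a * (2 * α * t + β) / (α * t ^ 2 + β * t + γ) ^ 2) t :=
  ((hasDerivAt_const t a).div (hasDerivAt_quadratic α β γ t) h).congr_deriv (by ring)

lemma deriv_deriv_div_quadratic (h : α * t ^ 2 + β * t + γ ≠ 0) :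
    deriv (deriv fun s => a / (α * s ^ 2 + β * s + γ)) t
      = a * (2 * (2 * α * t + β) ^ 2 - 2 * α * (α * t ^ 2 + β * t + γ))
          / (α * t ^ 2 + β * t + γ) ^ 3 := by
  have hne : ∀ᶠ s in 𝓝 t, α * s ^ 2 + β * s + γ ≠ 0 :=
    (hasDerivAt_quadratic α β γ t).continuousAt.eventually_ne h
  have hderiv : deriv (fun s => a / (α * s ^ 2 + β * s + γ))
      =ᶠ[𝓝 t] fun s => -a * (2 * α * s + β) / (α * s ^ 2 + β * s + γ) ^ 2 :=
    hne.mono fun s hs => (hasDerivAt_div_quadratic a α β γ hs).deriv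
  have hlin : HasDerivAt (fun s => -a * (2 * α * s + β)) (-a * (2 * α)) t :=
    (((hasDerivAt_id t).const_mul (2 * α)).add_const β).const_mul (-a) |>.congr_deriv (by simp)
  rw [hderiv.deriv_eq,
    (hlin.fun_div ((hasDerivAt_quadratic α β γ t).fun_pow 2) (pow_ne_zero 2 h)).deriv]
  generalize α * t ^ 2 + β * t + γ = q at h ⊢
  field_simp
  ring

end InverseQuadratic

lemma deriv_deriv_neg_div_mul_sub_sq_add (a b c T : ℝ) {t : ℝ} (h : b * (T - t) ^ 2 + c ≠ 0) :
    deriv (deriv fun s => -a / (b * (T - s) ^ 2 + c)) t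
      = 2 * a * b * (b * (T - t) ^ 2 + c - 4 * b * (T - t) ^ 2) / (b * (T - t) ^ 2 + c) ^ 3 := by
  have hquad : (fun s => -a / (b * (T - s) ^ 2 + c))
      = fun s => -a / (b * s ^ 2 + (-2 * b * T) * s + (b * T ^ 2 + c)) := by
    funext s; ring_nf
  rw [hquad, deriv_deriv_div_quadratic _ _ _ _ (by convert h using 1; ring)]
  ring

lemma iteratedFDeriv_two_apply_eq_deriv_deriv_line {E F : Type*} [NormedAddCommGroup E]
    [NormedSpace ℝ E] [NormedAddCommGroup F] [NormedSpace ℝ F] {f : E → F} {x : E}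
    (hf : ContDiffAt ℝ 2 f x) (v : E) :
    iteratedFDeriv ℝ 2 f x ![v, v] = deriv (deriv fun s : ℝ => f (x + s • v)) 0 := by
  have hline (s : ℝ) : HasDerivAt (fun s : ℝ => x + s • v) v s := by
    simpa using ((hasDerivAt_id s).smul_const v).const_add x
  have hx : Tendsto (fun s : ℝ => x + s • v) (𝓝 0) (𝓝 x) := by
    simpa using (hline 0).continuousAt.tendsto
  have hdiff : ∀ᶠ y in 𝓝 x, DifferentiableAt ℝ f y :=
    (hf.eventually (by simp)).mono fun y hy => hy.differentiableAt (by norm_num)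
  have hfirst : deriv (fun s : ℝ => f (x + s • v)) =ᶠ[𝓝 0] fun s => fderiv ℝ f (x + s • v) v := by
    filter_upwards [hx.eventually hdiff] with s hs
    exact (hs.hasFDerivAt.comp_hasDerivAt s (hline s)).deriv
  have hsecond : DifferentiableAt ℝ (fderiv ℝ f) x :=
    (hf.fderiv_right (m := 1) le_rfl).differentiableAt one_ne_zero
  have hsecond_line := (hsecond.hasFDerivAt.comp_hasDerivAt_of_eq 0 (hline 0) (by simp)).clm_apply
    (hasDerivAt_const 0 v)
  rw [hfirst.deriv_eq, iteratedFDeriv_two_apply]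
  simpa using hsecond_line.deriv.symm

section InverseNormSq

variable {E : Type*} [NormedAddCommGroup E] [InnerProductSpace ℝ E] (a c : ℝ) {x : E}

lemma neg_div_add_norm_sq_line (x v : E) :
    (fun s : ℝ => -a / (c + ‖x + s • v‖ ^ 2))
      = fun s => -a / (‖v‖ ^ 2 * s ^ 2 + 2 * ⟪x, v⟫ * s + (c + ‖x‖ ^ 2)) := by
  funext s
  rw [norm_add_sq_real, norm_smul, inner_smul_right, mul_pow, Real.norm_eq_abs, sq_abs]
  ring

lemma iteratedFDeriv_two_neg_div_add_norm_sq (h : c + ‖x‖ ^ 2 ≠ 0) (v : E) :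
    iteratedFDeriv ℝ 2 (fun y : E => -a / (c + ‖y‖ ^ 2)) x ![v, v]
      = 2 * a * (‖v‖ ^ 2 * (c + ‖x‖ ^ 2) - 4 * ⟪x, v⟫ ^ 2) / (c + ‖x‖ ^ 2) ^ 3 := by
  have hsmooth : ContDiffAt ℝ 2 (fun y : E => -a / (c + ‖y‖ ^ 2)) x :=
    contDiffAt_const.div (contDiffAt_const.add (contDiff_norm_sq ℝ).contDiffAt) h
  rw [iteratedFDeriv_two_apply_eq_deriv_deriv_line hsmooth, neg_div_add_norm_sq_line,
    deriv_deriv_div_quadratic _ _ _ _ (by simpa using h)]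
  ring

lemma lap_neg_div_add_norm_sq {d : ℕ} {x : EuclideanSpace ℝ (Fin d)} (h : c + ‖x‖ ^ 2 ≠ 0) :
    lap d (fun y => -a / (c + ‖y‖ ^ 2)) x
      = 2 * a * (d * (c + ‖x‖ ^ 2) - 4 * ‖x‖ ^ 2) / (c + ‖x‖ ^ 2) ^ 3 := by
  have hsum : ∑ i : Fin d, x i ^ 2 = ‖x‖ ^ 2 := by
    simp [EuclideanSpace.norm_sq_eq]
  simp only [lap, iteratedFDeriv_two_neg_div_add_norm_sq a c h, PiLp.norm_single,
    norm_one, one_pow, one_mul, EuclideanSpace.inner_single_right, conj_trivial]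
  rw [← Finset.sum_div, ← Finset.mul_sum, Finset.sum_sub_distrib, ← Finset.mul_sum, hsum]
  simp only [Finset.sum_const, Finset.card_univ, Fintype.card_fin, smul_add, nsmul_eq_mul]
  ring

end InverseNormSq

section Constants

variable {d : ℕ}

lemma sqrt_three_mul_sub_four_mul_sub_six (hd : 6 ≤ d) :
    √(3 * ((d : ℝ) - 4) * ((d : ℝ) - 6))
      = 3 * ((d : ℝ) - 4) * √(((d : ℝ) - 6) / (3 * ((d : ℝ) - 4))) := by
  have : (6 : ℝ) ≤ d := by exact_mod_cast hd
  rw [mul_sqrt_div_eq_sqrt_mul (by linarith)]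

lemma six_mul_bd_add_two_mul (hd : 6 ≤ d) : 6 * bd d + 2 * d = 3 * ((d : ℝ) - 4) * ad d := by
  rw [bd, ad, sqrt_three_mul_sub_four_mul_sub_six hd]
  ring

lemma eight_mul_bd_add_one (hd : 6 ≤ d) : 8 * (bd d + 1) = ((d : ℝ) - 4) * ad d ^ 2 := by
  have h6 : (6 : ℝ) ≤ d := by exact_mod_cast hd
  have hsq : 3 * ((d : ℝ) - 4) * √(((d : ℝ) - 6) / (3 * ((d : ℝ) - 4))) ^ 2 = d - 6 := by
    have : (d : ℝ) - 4 ≠ 0 := by linarith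
    rw [Real.sq_sqrt (div_nonneg (by linarith) (by linarith))]
    field_simp
  rw [bd, ad, sqrt_three_mul_sub_four_mul_sub_six hd]
  linear_combination (-4 / 3 : ℝ) * hsq

lemma bd_pos (hd : 7 ≤ d) : 0 < bd d := by
  have h7 : (7 : ℝ) ≤ d := by exact_mod_cast hd
  have := Real.sqrt_nonneg (3 * ((d : ℝ) - 4) * ((d : ℝ) - 6))
  rw [bd]
  linarith

end Constants

lemma mul_sq_add_norm_sq_pos {E : Type*} [NormedAddCommGroup E] {b T t : ℝ} {x : E} (hb : 0 < b)
    (h : (t, x) ≠ (T, 0)) : 0 < b * (T - t) ^ 2 + ‖x‖ ^ 2 := by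
  rcases eq_or_ne x 0 with rfl | hx
  · have : T - t ≠ 0 := sub_ne_zero.2 fun hT => h (by rw [hT])
    simpa using mul_pos hb (sq_pos_of_ne_zero this)
  · exact add_pos_of_nonneg_of_pos (by positivity) (by positivity)

lemma contDiffOn_neg_div_mul_sq_add_norm_sq {E : Type*} [NormedAddCommGroup E]
    [InnerProductSpace ℝ E] {n : WithTop ℕ∞} (a : ℝ) {b : ℝ} (T : ℝ) (hb : 0 < b) :
    ContDiffOn ℝ n (fun p : ℝ × E => -a / (b * (T - p.1) ^ 2 + ‖p.2‖ ^ 2)) {p | p ≠ (T, 0)} := by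
  refine contDiffOn_const.div (ContDiff.contDiffOn ?_) fun p hp => ?_
  · exact (contDiff_const.mul ((contDiff_const.sub contDiff_fst).pow 2)).add
      ((contDiff_norm_sq ℝ).comp contDiff_snd)
  · exact (mul_sq_add_norm_sq_pos hb hp).ne'

theorem uStar_smooth_and_solves (d : ℕ) (hd : 7 ≤ d) (T : ℝ) :
    ContDiffOn ℝ (⊤ : ℕ∞) (fun p : ℝ × EuclideanSpace ℝ (Fin d) => uStar d T p.1 p.2)
      {p : ℝ × EuclideanSpace ℝ (Fin d) | p ≠ (T, 0)} ∧
    ∀ (t : ℝ) (x : EuclideanSpace ℝ (Fin d)),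
      (t, x) ≠ (T, (0 : EuclideanSpace ℝ (Fin d))) →
      -(deriv (fun t' => deriv (fun t'' => uStar d T t'' x) t') t)
          + lap d (fun x' => uStar d T t x') x
        = ((d : ℝ) - 4) * (‖x‖ ^ 2 * (uStar d T t x) ^ 3 + 3 * (uStar d T t x) ^ 2) := by
  have hb := bd_pos hd
  refine ⟨contDiffOn_neg_div_mul_sq_add_norm_sq (ad d) T hb, fun t x hne => ?_⟩
  have hQ := (mul_sq_add_norm_sq_pos hb hne).ne'
  have hA := six_mul_bd_add_two_mul (by omega : 6 ≤ d)
  have hB := eight_mul_bd_add_one (by omega : 6 ≤ d)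
  simp only [uStar]
  rw [deriv_deriv_neg_div_mul_sub_sq_add _ _ _ _ hQ, lap_neg_div_add_norm_sq _ _ hQ]
  field_simp
  linear_combination (ad d * (bd d * (T - t) ^ 2 + ‖x‖ ^ 2)) * hA - (ad d * ‖x‖ ^ 2) * hB
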